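/- arXiv:2102.02692 — 3 statements merged into one kernel-verified Lean document; each statement's English description precedes it below -/
import Mathlib

section
/- Let $(X,q)$ be a mobi space over a mobi algebra $A$. Then $q(x,\text{½},q(x,a,y))=q(x,a,q(x,\text{½},y))$ for all $x,y\in X$, $a\in A$. -/
structure MobiAlgebra (A : Type*) where
  p : A → A → A → A
  zero : A
  half : A
  one : A
  A1 : p one half zero = half
  A2 : ∀ a, p zero a one = a
  A3 : ∀ a b, p a b a = a
  A4 : ∀ a b, p a zero b = a
  A5 : ∀ a b, p a one b = b
  A6 : ∀ a b₁ b₂, p a half b₁ = p a half b₂ → b₁ = b₂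
  A7 : ∀ a b c₁ c₂ c₃, p a (p c₁ c₂ c₃) b = p (p a c₁ b) c₂ (p a c₃ b)
  A8 : ∀ a₁ a₂ b₁ b₂ c,
    p (p a₁ c b₁) half (p a₂ c b₂) = p (p a₁ half a₂) c (p b₁ half b₂)

structure MobiSpace {A : Type*} (M : MobiAlgebra A) (X : Type*) where
  q : X → A → X → X
  X1 : ∀ x y, q x M.zero y = x
  X2 : ∀ x y, q x M.one y = y
  X3 : ∀ x a, q x a x = x
  X4 : ∀ x y₁ y₂, q x M.half y₁ = q x M.half y₂ → y₁ = y₂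
  X5 : ∀ x y a b c, q (q x a y) b (q x c y) = q x (M.p a b c) y

/-! Both sides equal `q x (p 0 ½ a) y`: by (X1) and (X5), `q x b (q x a y) = q x (p 0 b a) y`,
and in a mobi algebra `p 0 ½ a = p a ½ 0 = p 0 a ½`. -/

namespace MobiAlgebra

variable {A : Type*} (M : MobiAlgebra A)

theorem p_half_comm (u v : A) : M.p u M.half v = M.p v M.half u := by
  simpa only [M.A1, M.A5, M.A4] using M.A7 u v M.one M.half M.zero

theorem p_half_zero (c : A) : M.p c M.half M.zero = M.p M.zero c M.half := by
  simpa only [M.A2, M.A3, M.A1] using M.A8 M.zero M.zero M.one M.zero c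

theorem p_zero_half (a : A) : M.p M.zero M.half a = M.p M.zero a M.half := by
  rw [M.p_half_comm, M.p_half_zero]

end MobiAlgebra

namespace MobiSpace

variable {A X : Type*} {M : MobiAlgebra A} (S : MobiSpace M X)

theorem q_q_self_left (x y : X) (a b : A) :
    S.q x b (S.q x a y) = S.q x (M.p M.zero b a) y := by
  simpa only [S.X1] using S.X5 x y M.zero b a

end MobiSpace

theorem q_half_comm {A X : Type*} (M : MobiAlgebra A) (S : MobiSpace M X)
    (x y : X) (a : A) :
    S.q x M.half (S.q x a y) = S.q x a (S.q x M.half y) := by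
  rw [S.q_q_self_left, S.q_q_self_left, M.p_zero_half]
end

section
/- Let $(X,q)$ be a mobi space over a mobi algebra $A$. Then $q(q(x,a,y),\text{½},q(y,a,x))=q(x,\text{½},y)$ for all $x,y\in X$, $a\in A$. -/
/-!
Reversing a segment replaces the parameter `a` by `1 - a`, so by (X5) the left-hand side is
`q x (p a ½ (1 - a)) y`. In the algebra, writing `a = p 0 a 1` and `1 - a = p 1 a 0`, axiom (A8)
turns `p a ½ (1 - a)` into `p (p 0 ½ 1) a (p 1 ½ 0) = p ½ a ½ = ½`.
-/

/-- The complement `1 - a`. -/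
def MobiAlgebra.compl {A : Type*} (M : MobiAlgebra A) (a : A) : A :=
  M.p M.one a M.zero

theorem MobiAlgebra.p_half_compl {A : Type*} (M : MobiAlgebra A) (a : A) :
    M.p a M.half (M.compl a) = M.half :=
  calc M.p a M.half (M.compl a)
      = M.p (M.p M.zero a M.one) M.half (M.p M.one a M.zero) := by rw [M.A2]; rfl
    _ = M.p (M.p M.zero M.half M.one) a (M.p M.one M.half M.zero) := M.A8 _ _ _ _ _
    _ = M.p M.half a M.half := by rw [M.A2, M.A1]
    _ = M.half := M.A3 _ _

theorem MobiSpace.q_swap {A X : Type*} {M : MobiAlgebra A} (S : MobiSpace M X)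
    (x y : X) (a : A) : S.q y a x = S.q x (M.compl a) y := by
  rw [MobiAlgebra.compl, ← S.X5, S.X2, S.X1]

theorem q_midpoint_sym {A X : Type*} (M : MobiAlgebra A) (S : MobiSpace M X)
    (x y : X) (a : A) :
    S.q (S.q x a y) M.half (S.q y a x) = S.q x M.half y := by
  rw [S.q_swap x y a, S.X5, M.p_half_compl]
end

section
/- Let $(X,q)$ be a mobi space over a mobi algebra $A$. If $q(x,a,y)=q(y,a,x)$ then $q(x,a,y)=q(x,\text{½},y)$. -/
/-!
Symmetry of `q x a y` under exchanging `x` and `y` says that `q x a y = q x ā y`, where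
`ā = p 1 a 0` is the complement of `a`. The point `q x (p a ½ ā) y` is then the midpoint of a point
with itself, hence equals `q x a y`; and `p a ½ ā = ½` by (A8).
-/

namespace MobiAlgebra

variable {A : Type*} (M : MobiAlgebra A)

/-- In the model `[0, 1]` this is `1 - a`. -/
def compl_s13 (a : A) : A := M.p M.one a M.zero

theorem p_half_compl_s13 (a : A) : M.p a M.half (M.compl_s13 a) = M.half := by
  have h := M.A8 M.zero M.one M.one M.zero a
  rwa [M.A2, M.A2, M.A1, M.A3] at h

end MobiAlgebra

namespace MobiSpace

variable {A X : Type*} {M : MobiAlgebra A} (S : MobiSpace M X)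

theorem q_swap_s13 (x y : X) (a : A) : S.q x a y = S.q y (M.compl_s13 a) x := by
  have h := S.X5 y x M.one a M.zero
  rwa [S.X2, S.X1] at h

theorem q_p_half_of_eq {x y : X} {a b : A} (h : S.q x a y = S.q x b y) :
    S.q x (M.p a M.half b) y = S.q x a y := by
  rw [← S.X5, ← h, S.X3]

end MobiSpace

theorem q_sym_implies_half {A X : Type*} (M : MobiAlgebra A) (S : MobiSpace M X)
    (x y : X) (a : A) (h : S.q x a y = S.q y a x) :
    S.q x a y = S.q x M.half y := by
  have h_compl : S.q x a y = S.q x (M.compl_s13 a) y := h.trans (S.q_swap_s13 y x a)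
  rw [← S.q_p_half_of_eq h_compl, M.p_half_compl_s13]
end
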